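/- Fix m ≥ 1 and δ > 0, and set χ = (m+δ)/(2m+δ) (so χ > 1/2). Define the kernel κ((x,s),(y,t)) = c_{st}·(1_{x>y, t=Old} + 1_{x<y, t=Young})/((x∨y)^χ·(x∧y)^{1−χ}) on S_e = (0,∞)×{Old,Young}, with c_{OldOld} = c_{YoungYoung} = m(m+δ)/(2m+δ), c_{OldYoung} = m(m+1+δ)/(2m+δ), c_{YoungOld} = (m−1)(m+δ)/(2m+δ). Let p = (p_Old, p_Young) be the right Perron eigenvector of the 2×2 matrix M = (c_{st}) with eigenvalue λ_M = c_{OldOld} + √(c_{OldYoung}·c_{YoungOld}). Then the function f(x,s) = p_s/√x satisfies ∑_t ∫₀^∞ κ((x,s),(y,t))·f(y,t) dy = (2λ_M/(2χ−1))·f(x,s) for all (x,s), i.e. f is an eigenfunction of the integral operator with eigenvalue 2(m(m+δ)+√(m(m−1)(m+δ)(m+1+δ)))/δ. -/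
import Mathlib


open MeasureTheory

/-- Labels of nodes in the Pólya point tree. -/
inductive Label : Type
  | old : Label
  | young : Label
deriving DecidableEq

open Label

/-- The constants `c_{st}` of the Pólya point tree mean-offspring kernel. -/
noncomputable def cst (m : ℕ) (δ : ℝ) : Label → Label → ℝ
  | old, old => m * (m + δ) / (2 * m + δ)
  | old, young => m * (m + 1 + δ) / (2 * m + δ)
  | young, old => (m - 1) * (m + δ) / (2 * m + δ)
  | young, young => m * (m + δ) / (2 * m + δ)

/-- The Pólya point tree mean-offspring kernel
`κ((x,s),(y,t)) = c_{st}(1_{x>y,t=Old} + 1_{x<y,t=Young})/((x∨y)^χ (x∧y)^{1-χ})`. -/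
noncomputable def pptKernel (m : ℕ) (δ χ : ℝ) (x : ℝ) (s : Label) (y : ℝ) (t : Label) : ℝ :=
  cst m δ s t * ((if y < x ∧ t = old then 1 else 0) + (if x < y ∧ t = young then 1 else 0)) /
    (max x y ^ χ * min x y ^ (1 - χ))

lemma intA (χ x : ℝ) (hx : 0 < x) (hχ : 1/2 < χ) :
    (∫ y in Set.Ioi (0:ℝ),
        (if y < x then (1:ℝ) else 0) / (max x y ^ χ * min x y ^ (1 - χ)) / Real.sqrt y)
      = 2 / (2*χ - 1) / Real.sqrt x := by
  have h1 : (∫ y in Set.Ioi (0:ℝ),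
        (if y < x then (1:ℝ) else 0) / (max x y ^ χ * min x y ^ (1 - χ)) / Real.sqrt y)
      = ∫ y in Set.Ioi (0:ℝ),
          Set.indicator (Set.Ioo 0 x) (fun y => x ^ (-χ) * y ^ (χ - 3/2)) y := by
    apply setIntegral_congr_fun measurableSet_Ioi
    intro y hy
    simp only [Set.mem_Ioi] at hy
    by_cases hyx : y < x
    · rw [Set.indicator_of_mem (Set.mem_Ioo.mpr ⟨hy, hyx⟩)]
      simp only [if_pos hyx, max_eq_left hyx.le, min_eq_right hyx.le]
      rw [Real.sqrt_eq_rpow, div_div, mul_assoc, ← Real.rpow_add hy,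
        show (1-χ) + 1/2 = -(χ - 3/2) by ring, Real.rpow_neg hy.le,
        one_div, mul_inv, inv_inv, Real.rpow_neg hx.le]
    · rw [Set.indicator_of_notMem (fun h => hyx (Set.mem_Ioo.mp h).2)]
      simp only [if_neg hyx, zero_div]
  rw [h1, setIntegral_indicator measurableSet_Ioo,
    show Set.Ioi (0:ℝ) ∩ Set.Ioo 0 x = Set.Ioo 0 x by
      rw [Set.inter_eq_right]; exact Set.Ioo_subset_Ioi_self,
    ← integral_Ioc_eq_integral_Ioo, ← intervalIntegral.integral_of_le hx.le,
    intervalIntegral.integral_const_mul,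
    integral_rpow (Or.inl (by norm_num; linarith))]
  rw [show χ - 3/2 + 1 = χ - 1/2 by ring, Real.zero_rpow (by intro h; linarith), sub_zero]
  have h2 : x ^ (-χ) * x ^ (χ - 1/2) = x ^ (-(1/2) : ℝ) := by
    rw [← Real.rpow_add hx, show -χ + (χ - 1/2) = -(1/2) by ring]
  rw [mul_div_assoc', h2, Real.sqrt_eq_rpow, Real.rpow_neg hx.le]
  have h3 : x ^ ((1:ℝ)/2) ≠ 0 := (Real.rpow_pos_of_pos hx _).ne'
  field_simp

lemma intB (χ x : ℝ) (hx : 0 < x) (hχ : 1/2 < χ) :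
    (∫ y in Set.Ioi (0:ℝ),
        (if x < y then (1:ℝ) else 0) / (max x y ^ χ * min x y ^ (1 - χ)) / Real.sqrt y)
      = 2 / (2*χ - 1) / Real.sqrt x := by
  have h1 : (∫ y in Set.Ioi (0:ℝ),
        (if x < y then (1:ℝ) else 0) / (max x y ^ χ * min x y ^ (1 - χ)) / Real.sqrt y)
      = ∫ y in Set.Ioi (0:ℝ),
          Set.indicator (Set.Ioi x) (fun y => x ^ (χ - 1) * y ^ (-(χ + 1/2))) y := by
    apply setIntegral_congr_fun measurableSet_Ioi
    intro y hy
    simp only [Set.mem_Ioi] at hy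
    by_cases hxy : x < y
    · rw [Set.indicator_of_mem (Set.mem_Ioi.mpr hxy)]
      simp only [if_pos hxy, max_eq_right hxy.le, min_eq_left hxy.le]
      rw [Real.sqrt_eq_rpow, div_div, mul_right_comm, ← Real.rpow_add hy,
        show χ + 1/2 = -(-(χ + 1/2)) by ring, Real.rpow_neg hy.le,
        show (1 : ℝ) - χ = -(χ - 1) by ring, Real.rpow_neg hx.le,
        one_div, mul_inv, inv_inv, inv_inv]
      ring
    · rw [Set.indicator_of_notMem (fun h => hxy (Set.mem_Ioi.mp h))]
      simp only [if_neg hxy, zero_div]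
  rw [h1, setIntegral_indicator measurableSet_Ioi,
    show Set.Ioi (0:ℝ) ∩ Set.Ioi x = Set.Ioi x by
      rw [Set.inter_eq_right]; exact Set.Ioi_subset_Ioi hx.le,
    MeasureTheory.integral_const_mul,
    integral_Ioi_rpow_of_lt (by linarith) hx]
  rw [show -(χ + 1/2) + 1 = -(χ - 1/2) by ring]
  have h2 : x ^ (χ - 1) * x ^ (-(χ - 1/2) : ℝ) = x ^ (-(1/2) : ℝ) := by
    rw [← Real.rpow_add hx, show (χ - 1) + -(χ - 1/2) = -(1/2) by ring]
  rw [neg_div_neg_eq, mul_div_assoc', h2, Real.sqrt_eq_rpow, Real.rpow_neg hx.le]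
  have h3 : x ^ ((1:ℝ)/2) ≠ 0 := (Real.rpow_pos_of_pos hx _).ne'
  field_simp

/-- For `m ≥ 1`, `δ > 0`, `χ = (m+δ)/(2m+δ)` and `p` the right Perron eigenvector of
`M = (c_{st})` with eigenvalue `λ_M = c_{OldOld} + √(c_{OldYoung} c_{YoungOld})`, the function
`f(x,s) = p_s/√x` is an eigenfunction of the integral operator with kernel `κ` on
`(0,∞) × {Old,Young}`, with eigenvalue `2λ_M/(2χ-1) = 2(m(m+δ)+√(m(m-1)(m+δ)(m+1+δ)))/δ`. -/
theorem ppt_operator_eigenfunction (m : ℕ) (hm : 1 ≤ m) (δ : ℝ) (hδ : 0 < δ)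
    (χ : ℝ) (hχ : χ = ((m:ℝ) + δ) / (2 * m + δ))
    (lamM : ℝ)
    (hlamM : lamM = cst m δ old old + Real.sqrt (cst m δ old young * cst m δ young old))
    (p : Label → ℝ) (hp : ∀ s, 0 < p s)
    (heig : ∀ s, cst m δ s old * p old + cst m δ s young * p young = lamM * p s) :
    (∀ x : ℝ, 0 < x → ∀ s : Label,
        (∫ y in Set.Ioi (0:ℝ), pptKernel m δ χ x s y old * (p old / Real.sqrt y)) +
          (∫ y in Set.Ioi (0:ℝ), pptKernel m δ χ x s y young * (p young / Real.sqrt y))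
        = 2 * lamM / (2 * χ - 1) * (p s / Real.sqrt x))
    ∧ 2 * lamM / (2 * χ - 1)
        = 2 * ((m:ℝ) * (m + δ) + Real.sqrt ((m:ℝ) * (m - 1) * (m + δ) * (m + 1 + δ))) / δ := by
  have hm0 : (0:ℝ) ≤ m := Nat.cast_nonneg m
  have h1m : (1:ℝ) ≤ m := by exact_mod_cast hm
  have h2m : (0:ℝ) < 2 * m + δ := by linarith
  have hχ2 : 1/2 < χ := by
    rw [hχ, lt_div_iff₀ h2m]; linarith
  constructor
  · intro x hx s
    have hold : (∫ y in Set.Ioi (0:ℝ), pptKernel m δ χ x s y old * (p old / Real.sqrt y))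
        = cst m δ s old * p old * (2/(2*χ-1)/Real.sqrt x) := by
      have heq : ∀ y : ℝ, pptKernel m δ χ x s y old * (p old / Real.sqrt y)
          = (cst m δ s old * p old) *
            ((if y < x then (1:ℝ) else 0) / (max x y ^ χ * min x y ^ (1-χ)) / Real.sqrt y) := by
        intro y
        simp only [pptKernel, reduceCtorEq, and_true, and_false, if_false, add_zero]
        ring
      simp_rw [heq]
      rw [MeasureTheory.integral_const_mul, intA χ x hx hχ2]
    have hyoung : (∫ y in Set.Ioi (0:ℝ), pptKernel m δ χ x s y young * (p young / Real.sqrt y))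
        = cst m δ s young * p young * (2/(2*χ-1)/Real.sqrt x) := by
      have heq : ∀ y : ℝ, pptKernel m δ χ x s y young * (p young / Real.sqrt y)
          = (cst m δ s young * p young) *
            ((if x < y then (1:ℝ) else 0) / (max x y ^ χ * min x y ^ (1-χ)) / Real.sqrt y) := by
        intro y
        simp only [pptKernel, reduceCtorEq, and_true, and_false, if_false, zero_add]
        ring
      simp_rw [heq]
      rw [MeasureTheory.integral_const_mul, intB χ x hx hχ2]
    rw [hold, hyoung,
      show cst m δ s old * p old * (2/(2*χ-1)/Real.sqrt x)
          + cst m δ s young * p young * (2/(2*χ-1)/Real.sqrt x)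
        = (cst m δ s old * p old + cst m δ s young * p young) * (2/(2*χ-1)/Real.sqrt x) by ring,
      heig s]
    ring
  · have hA : 2*χ - 1 = δ/(2*m+δ) := by
      rw [hχ]; field_simp; ring
    have hprod : cst m δ old young * cst m δ young old
        = ((m:ℝ)*(m-1)*(m+δ)*(m+1+δ))/(2*m+δ)^2 := by
      simp only [cst]; field_simp
    have hAnn : (0:ℝ) ≤ (m:ℝ)*(m-1)*(m+δ)*(m+1+δ) := by
      apply mul_nonneg; apply mul_nonneg; apply mul_nonneg
      · exact hm0
      · linarith
      · linarith
      · linarith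
    rw [hlamM, hA, hprod, Real.sqrt_div hAnn, Real.sqrt_sq h2m.le]
    simp only [cst]
    rw [div_div_eq_mul_div, div_eq_div_iff hδ.ne' hδ.ne']
    field_simp
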